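/- arXiv:1803.05933 — 4 statements merged into one kernel-verified Lean document; each statement's English description precedes it below -/
import Mathlib

section
/- Let F be a field of characteristic zero, let P ∈ F[x₁,…,xₙ,y] and f ∈ F[x₁,…,xₙ] be polynomials such that P(x, f(x)) = 0 and δ := H₀[(∂P/∂y)(x, f(x))] ≠ 0. Then for every i ∈ {1, 2, …, deg(f)} and every polynomial h ∈ F[x₁,…,xₙ] with H_{≤ i−1}[f] = H_{≤ i−1}[h], one has H_{≤ i}[f] = H_{≤ i}[h − P(x, h)/δ]. -/
open Polynomial MvPolynomial

/-! Write `h = f + e`. Agreement of `f` and `h` up to degree `i - 1` says that `e` has order at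
least `i`. By Taylor expansion `P(x, f + e) = P'(x, f) e + r e²`, and replacing `P'(x, f)` by its
constant term `δ`, or dropping `r e²`, only changes terms of order at least `i + 1` (as `i ≥ 1`).
So `P(x, h) ≡ δ e` up to degree `i`, i.e. `h - P(x, h)/δ ≡ f`. Orders are those of the
associated multivariate power series. -/

/-- `Hle k f` is `H_{≤k}[f]`, the sum of the homogeneous components of `f`
of degree at most `k`. -/
noncomputable def Hle {F : Type*} [CommSemiring F] {σ : Type*} (k : ℕ)
    (f : MvPolynomial σ F) : MvPolynomial σ F :=
  ∑ i ∈ Finset.range (k + 1), MvPolynomial.homogeneousComponent i f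

theorem coeff_Hle {R σ : Type*} [CommSemiring R] (k : ℕ) (p : MvPolynomial σ R) (m : σ →₀ ℕ) :
    MvPolynomial.coeff m (Hle k p) = if m.degree ≤ k then MvPolynomial.coeff m p else 0 := by
  simp [Hle, MvPolynomial.coeff_sum, coeff_homogeneousComponent]

theorem Hle_eq_Hle_iff {R σ : Type*} [CommRing R] (k : ℕ) (p q : MvPolynomial σ R) :
    Hle k p = Hle k q ↔
      (k + 1 : ℕ∞) ≤ MvPowerSeries.order (↑(p - q : MvPolynomial σ R) : MvPowerSeries σ R) := by
  simp only [MvPolynomial.ext_iff, coeff_Hle]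
  constructor
  · intro hpq
    refine MvPowerSeries.le_order fun m hm => ?_
    have hmk : m.degree ≤ k := by exact_mod_cast Order.le_of_lt_add_one hm
    simpa [MvPolynomial.coeff_sub, sub_eq_zero, hmk] using hpq m
  · intro hpq m
    split_ifs with hmk
    · have hm : (m.degree : ℕ∞) < k + 1 := by exact_mod_cast Nat.lt_succ_of_le hmk
      have := MvPowerSeries.coeff_of_lt_order (hm.trans_le hpq)
      rwa [MvPolynomial.coeff_coe, MvPolynomial.coeff_sub, sub_eq_zero] at this
    · rfl

theorem le_order_eval_add_sub_linear {R σ : Type*} [CommRing R] (P : (MvPolynomial σ R)[X])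
    (f e : MvPolynomial σ R) {i : ℕ} (hi : 1 ≤ i)
    (he : (i : ℕ∞) ≤ (e : MvPowerSeries σ R).order) :
    (i + 1 : ℕ∞) ≤ MvPowerSeries.order (↑(P.eval (f + e) - P.eval f -
      MvPolynomial.C (constantCoeff (P.derivative.eval f)) * e : MvPolynomial σ R) :
        MvPowerSeries σ R) := by
  obtain ⟨r, hr⟩ := P.binomExpansion f e
  set d := P.derivative.eval f - MvPolynomial.C (constantCoeff (P.derivative.eval f))
  have hd : 1 ≤ (d : MvPowerSeries σ R).order := by
    rw [MvPowerSeries.one_le_order_iff_constCoeff_eq_zero,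
      ← MvPowerSeries.coeff_zero_eq_constantCoeff_apply, MvPolynomial.coeff_coe]
    simp [d, MvPolynomial.constantCoeff_eq]
  have hsplit : P.eval (f + e) - P.eval f -
      MvPolynomial.C (constantCoeff (P.derivative.eval f)) * e = d * e + r * e ^ 2 := by
    rw [hr]; ring
  rw [hsplit, MvPolynomial.coe_add, MvPolynomial.coe_mul, MvPolynomial.coe_mul,
    MvPolynomial.coe_pow]
  refine le_trans (le_min ?_ ?_) MvPowerSeries.min_order_le_add
  · calc (i + 1 : ℕ∞) ≤ _ := by rw [add_comm]; exact add_le_add hd he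
      _ ≤ _ := MvPowerSeries.le_order_mul
  · calc (i + 1 : ℕ∞) ≤ 2 • (e : MvPowerSeries σ R).order := by
          rw [two_nsmul]; exact add_le_add he (le_trans (by exact_mod_cast hi) he)
      _ ≤ _ := MvPowerSeries.le_order_pow 2
      _ ≤ _ := le_add_self
      _ ≤ _ := MvPowerSeries.le_order_mul

theorem hensel_lifting_step_general {F : Type*} [Field F] {n : ℕ}
    (P : Polynomial (MvPolynomial (Fin n) F)) (f : MvPolynomial (Fin n) F)
    (hroot : Polynomial.eval f P = 0)
    (δ : F)
    (hδ : δ = MvPolynomial.constantCoeff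
        (Polynomial.eval f (Polynomial.hasseDeriv 1 P)))
    (hδne : δ ≠ 0)
    (i : ℕ) (hi1 : 1 ≤ i)
    (h : MvPolynomial (Fin n) F)
    (hagree : Hle (i - 1) f = Hle (i - 1) h) :
    Hle i f = Hle i (h - δ⁻¹ • Polynomial.eval h P) := by
  rw [hasseDeriv_one] at hδ
  have he : (i : ℕ∞) ≤ MvPowerSeries.order (↑(h - f) : MvPowerSeries (Fin n) F) := by
    have := (Hle_eq_Hle_iff (i - 1) h f).1 hagree.symm
    rwa [show ((i - 1 : ℕ) : ℕ∞) + 1 = i by norm_cast; omega] at this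
  have hCδ : MvPolynomial.C δ⁻¹ * MvPolynomial.C δ = (1 : MvPolynomial (Fin n) F) := by
    rw [← map_mul, inv_mul_cancel₀ hδne, map_one]
  have hdiff : f - (h - δ⁻¹ • P.eval h) = MvPolynomial.C δ⁻¹ *
      (P.eval (f + (h - f)) - P.eval f - MvPolynomial.C δ * (h - f)) := by
    rw [MvPolynomial.smul_eq_C_mul, hroot, add_sub_cancel]
    linear_combination (h - f) * hCδ
  rw [Hle_eq_Hle_iff, hdiff, MvPolynomial.coe_mul]
  refine le_trans (le_add_left ?_) MvPowerSeries.le_order_mul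
  rw [hδ]
  exact le_order_eval_add_sub_linear P f (h - f) hi1 he

/-- **Hensel lifting step.** If `P(x, f) = 0` and
`δ = H₀[(∂P/∂y)(x, f)] ≠ 0` then for every `1 ≤ i ≤ deg f` and every `h`
agreeing with `f` up to degree `i - 1`, the polynomial `h - P(x,h)/δ`
agrees with `f` up to degree `i`. -/
theorem hensel_lifting_step {F : Type*} [Field F] [CharZero F] {n : ℕ}
    (P : Polynomial (MvPolynomial (Fin n) F)) (f : MvPolynomial (Fin n) F)
    (hroot : Polynomial.eval f P = 0)
    (δ : F)
    (hδ : δ = MvPolynomial.constantCoeff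
        (Polynomial.eval f (Polynomial.hasseDeriv 1 P)))
    (hδne : δ ≠ 0)
    (i : ℕ) (hi1 : 1 ≤ i) (hi2 : i ≤ f.totalDegree)
    (h : MvPolynomial (Fin n) F)
    (hagree : Hle (i - 1) f = Hle (i - 1) h) :
    Hle i f = Hle i (h - δ⁻¹ • Polynomial.eval h P) :=
  hensel_lifting_step_general P f hroot δ hδ hδne i hi1 h hagree
end

section
/- Let F be a field of characteristic zero, let P ∈ F[x₁,…,xₙ,y] be of total degree r and f ∈ F[x₁,…,xₙ] of total degree d, with P(x, f(x)) = 0 and δ := H₀[(∂P/∂y)(x, f(x))] ≠ 0. Let g₀, g₁, …, g_t (with t ≤ d) be the distinct elements of the set G_y(P, H₀[f], d). Then for every i ∈ {1, 2, …, d} there exists a polynomial A_i ∈ F[z₀, z₁, …, z_t] of degree at most i such that H_{≤ i}[f] = H_{≤ i}[A_i(g₀, g₁, …, g_t)]. -/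
open Polynomial MvPolynomial
open scoped Classical

/-- `G_y(P, α, d)`: the set of nonzero polynomials among
`H_{≤d}[(∂ʲP/∂yʲ)(x, α)] − H₀[(∂ʲP/∂yʲ)(x, α)]`, for `j = 0, 1, …, d`,
where `∂ʲ/∂yʲ` is the `j`-th Hasse derivative with respect to `y`. -/
noncomputable def Gset {F : Type*} [CommRing F] {n : ℕ}
    (P : Polynomial (MvPolynomial (Fin n) F)) (α : F) (d : ℕ) :
    Finset (MvPolynomial (Fin n) F) :=
  ((Finset.range (d + 1)).image (fun j =>
      Hle d (Polynomial.eval (MvPolynomial.C α) (Polynomial.hasseDeriv j P)) -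
        MvPolynomial.homogeneousComponent 0
          (Polynomial.eval (MvPolynomial.C α) (Polynomial.hasseDeriv j P)))).filter
    (fun q => q ≠ 0)

/-- The total degree of `P ∈ F[x₁,…,xₙ,y]` (viewed as a polynomial in `y` over
`F[x₁,…,xₙ]`), counting all variables including `y`. -/
noncomputable def totalDegXY {F : Type*} [CommRing F] {n : ℕ}
    (P : Polynomial (MvPolynomial (Fin n) F)) : ℕ :=
  P.support.sup (fun i => i + (P.coeff i).totalDegree)

/-!
Write `m` for the ideal of `F[x₁,…,xₙ]` generated by the variables and `α = H₀[f]`. Taylor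
expansion of `P` in `y` around `α`, with every coefficient cut off at degree `d`, gives a
polynomial `T(Y) = Σ_{j ≤ d} H_{≤d}[(∂ʲP/∂yʲ)(x, α)] Yʲ` whose coefficients lie in `F[g₀, …, g_t]`,
since each is a constant plus an element of `G_y(P, α, d)`. Then `w = f - α` is a root of `T`
modulo `m^(d+1)`, and `T'(0) ≡ δ` modulo `m` is invertible. Newton's iteration `s ↦ s - δ⁻¹ T(s)`
from `s = 0` gains one power of `m` per step and never leaves `F[g₀, …, g_t]`, so
`f ≡ α + s = B(g)` modulo `m^(i+1)`. As every `gⱼ ∈ m`, replacing `B` by `H_{≤i}[B]` changes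
`B(g)` only by an element of `m^(i+1)`, which is invisible to `H_{≤i}`.
-/

namespace Polynomial

variable {R : Type*} [CommRing R]

lemma eval_sub_eval_mem {I : Ideal R} (T : R[X]) {a b : R} (h : a - b ∈ I) :
    T.eval a - T.eval b ∈ I :=
  I.mem_of_dvd (sub_dvd_eval_sub a b T) h

lemma eval_mem_of_coeff_mem {S : Subring R} {T : R[X]} (hT : ∀ j, T.coeff j ∈ S) {s : R}
    (hs : s ∈ S) : T.eval s ∈ S := by
  rw [eval_eq_sum_range]
  exact sum_mem fun j _ => mul_mem (hT j) (pow_mem hs j)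

lemma eval_mem_of_coeff_mul_pow_mem {I : Ideal R} {T : R[X]} {w : R}
    (h : ∀ j, T.coeff j * w ^ j ∈ I) : T.eval w ∈ I := by
  rw [eval_eq_sum_range]
  exact Ideal.sum_mem _ fun j _ => h j

/-- A Newton step `s ↦ s - u T(s)`, where `u` inverts `T'(s)` modulo `I`. -/
lemma sub_sub_mul_eval_mem_pow_succ {I : Ideal R} {T : R[X]} {u w s : R} {k : ℕ} (hk : k ≠ 0)
    (hws : w - s ∈ I ^ k) (hTw : T.eval w ∈ I ^ (k + 1))
    (hu : u * T.derivative.eval s - 1 ∈ I) : w - (s - u * T.eval s) ∈ I ^ (k + 1) := by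
  obtain ⟨c, hc⟩ := T.binomExpansion s (w - s)
  rw [add_sub_cancel] at hc
  have hsq : (w - s) ^ 2 ∈ I ^ (k + 1) :=
    Ideal.pow_le_pow_right (by omega) (pow_mul I k 2 ▸ Ideal.pow_mem_pow hws 2)
  have hlin : (u * T.derivative.eval s - 1) * (w - s) ∈ I ^ (k + 1) :=
    pow_succ' I k ▸ Ideal.mul_mem_mul hu hws
  have hexpand : w - (s - u * T.eval s)
      = u * T.eval w - (u * T.derivative.eval s - 1) * (w - s) - u * c * (w - s) ^ 2 := by
    rw [hc]; ring
  rw [hexpand]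
  exact sub_mem (sub_mem (Ideal.mul_mem_left _ _ hTw) hlin) (Ideal.mul_mem_left _ _ hsq)

/-- Hensel's lemma, by Newton's iteration started at `0`. -/
theorem exists_mem_sub_mem_pow_of_eval_mem {S : Subring R} {I : Ideal R} {T : R[X]}
    (hT : ∀ j, T.coeff j ∈ S) {u : R} (huS : u ∈ S) (hu : u * T.derivative.eval 0 - 1 ∈ I)
    {w : R} (hw : w ∈ I) {N : ℕ} (hTw : T.eval w ∈ I ^ N) :
    ∀ k < N, ∃ s ∈ S, w - s ∈ I ^ (k + 1) := by
  intro k hk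
  induction k with
  | zero => exact ⟨0, zero_mem S, by simpa using hw⟩
  | succ k ih =>
    obtain ⟨s, hsS, hs⟩ := ih (by omega)
    have hsI : s ∈ I := by
      simpa using sub_mem hw (Ideal.pow_le_self k.succ_ne_zero hs)
    have hus : u * T.derivative.eval s - 1 ∈ I := by
      have := Ideal.mul_mem_left I u (T.derivative.eval_sub_eval_mem (sub_zero s ▸ hsI))
      simpa [mul_sub] using add_mem hu this
    refine ⟨s - u * T.eval s, sub_mem hsS (mul_mem huS (eval_mem_of_coeff_mem hT hsS)), ?_⟩
    exact sub_sub_mul_eval_mem_pow_succ k.succ_ne_zero hs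
      (Ideal.pow_le_pow_right (by omega) hTw) hus

end Polynomial

namespace MvPolynomial

variable {σ R : Type*}

lemma coeff_Hle [CommSemiring R] (k : ℕ) (p : MvPolynomial σ R) (e : σ →₀ ℕ) :
    coeff e (Hle k p) = if e.degree ≤ k then coeff e p else 0 := by
  simp only [Hle, coeff_sum, coeff_homogeneousComponent, Finset.sum_ite_eq, Finset.mem_range,
    Nat.lt_succ_iff]

lemma totalDegree_Hle_le [CommSemiring R] (k : ℕ) (p : MvPolynomial σ R) :
    (Hle k p).totalDegree ≤ k :=
  (totalDegree_finsetSum _ _).trans <| Finset.sup_le fun j hj =>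
    (homogeneousComponent_isHomogeneous j p).totalDegree_le.trans
      (Nat.lt_succ_iff.1 (Finset.mem_range.1 hj))

variable [CommRing R]

lemma mem_idealOfVars_iff (p : MvPolynomial σ R) :
    p ∈ idealOfVars σ R ↔ constantCoeff p = 0 := by
  rw [← pow_one (idealOfVars σ R), mem_pow_idealOfVars_iff']
  simp [Finsupp.degree_eq_zero_iff, constantCoeff_eq]

lemma constantCoeff_Hle (k : ℕ) (p : MvPolynomial σ R) :
    constantCoeff (Hle k p) = constantCoeff p := by
  simp [constantCoeff_eq, coeff_Hle]

lemma sub_Hle_mem_pow_idealOfVars (k : ℕ) (p : MvPolynomial σ R) :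
    p - Hle k p ∈ idealOfVars σ R ^ (k + 1) :=
  (mem_pow_idealOfVars_iff' _ _).2 fun e he => by
    rw [coeff_sub, coeff_Hle, if_pos (Nat.lt_succ_iff.1 he), sub_self]

lemma Hle_eq_Hle_of_sub_mem {k : ℕ} {p q : MvPolynomial σ R}
    (h : p - q ∈ idealOfVars σ R ^ (k + 1)) : Hle k p = Hle k q := by
  ext e
  rw [coeff_Hle, coeff_Hle]
  split_ifs with he
  · exact sub_eq_zero.1 (by simpa using (mem_pow_idealOfVars_iff' _ _).1 h e (by omega))
  · rfl

lemma Hle_sub_homogeneousComponent_zero_mem_idealOfVars (k : ℕ) (p : MvPolynomial σ R) :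
    Hle k p - homogeneousComponent 0 p ∈ idealOfVars σ R := by
  rw [mem_idealOfVars_iff, map_sub, constantCoeff_Hle, homogeneousComponent_zero, constantCoeff_C,
    constantCoeff_eq, sub_self]

lemma aeval_mem_pow_of_mem_pow_idealOfVars {A : Type*} [CommRing A] [Algebra R A] {I : Ideal A}
    {g : σ → A} (hg : ∀ j, g j ∈ I) {k : ℕ} {p : MvPolynomial σ R}
    (hp : p ∈ idealOfVars σ R ^ k) : aeval g p ∈ I ^ k := by
  have hmap : (idealOfVars σ R).map (aeval (R := R) g) ≤ I :=
    Ideal.map_le_iff_le_comap.2 <| Ideal.span_le.2 <| by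
      rintro _ ⟨j, rfl⟩
      simpa using hg j
  refine Ideal.pow_right_mono hmap k ?_
  rw [← Ideal.map_pow]
  exact Ideal.mem_map_of_mem _ hp

lemma exists_totalDegree_le_Hle_eq {τ : Type*} {g : τ → MvPolynomial σ R}
    (hg : ∀ j, g j ∈ idealOfVars σ R) {i : ℕ} {f s : MvPolynomial σ R}
    (hs : s ∈ (aeval (R := R) g).range) (hfs : f - s ∈ idealOfVars σ R ^ (i + 1)) :
    ∃ A : MvPolynomial τ R, A.totalDegree ≤ i ∧ Hle i f = Hle i (aeval g A) := by
  obtain ⟨B, rfl⟩ := hs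
  refine ⟨Hle i B, totalDegree_Hle_le i B, Hle_eq_Hle_of_sub_mem ?_⟩
  have hB := aeval_mem_pow_of_mem_pow_idealOfVars hg (sub_Hle_mem_pow_idealOfVars i B)
  rw [map_sub] at hB
  simpa using add_mem hfs hB

lemma constantCoeff_eval_C_constantCoeff (H : (MvPolynomial σ R)[X]) (f : MvPolynomial σ R) :
    constantCoeff (H.eval (C (constantCoeff f))) = constantCoeff (H.eval f) := by
  have hf : f - C (constantCoeff f) ∈ idealOfVars σ R := by simp [mem_idealOfVars_iff]
  have := (mem_idealOfVars_iff _).1 (H.eval_sub_eval_mem hf)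
  rwa [map_sub, sub_eq_zero, eq_comm] at this

end MvPolynomial

section TruncatedTaylor

variable {F : Type*} [CommRing F] {σ : Type*}

/-- `Σ_{j ≤ d} H_{≤d}[(∂ʲP/∂yʲ)(x, α)] Yʲ`: the Taylor expansion of `P` at `y = α`, in the
variable `Y = y - α`, with all coefficients truncated at degree `d`. -/
noncomputable def truncatedTaylor (P : (MvPolynomial σ F)[X]) (α : F) (d : ℕ) :
    (MvPolynomial σ F)[X] :=
  ∑ j ∈ Finset.range (d + 1),
    Polynomial.monomial j (Hle d ((hasseDeriv j P).eval (MvPolynomial.C α)))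

lemma coeff_truncatedTaylor (P : (MvPolynomial σ F)[X]) (α : F) (d j : ℕ) :
    (truncatedTaylor P α d).coeff j =
      if j ≤ d then Hle d ((hasseDeriv j P).eval (MvPolynomial.C α)) else 0 := by
  simp [truncatedTaylor, Polynomial.finsetSum_coeff, Polynomial.coeff_monomial,
    Finset.mem_range]

lemma eval_truncatedTaylor_sub_mem (P : (MvPolynomial σ F)[X]) (d : ℕ) {α : F}
    {f : MvPolynomial σ F} (hf : f - MvPolynomial.C α ∈ idealOfVars σ F) :
    (truncatedTaylor P α d).eval (f - MvPolynomial.C α) - P.eval f ∈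
      idealOfVars σ F ^ (d + 1) := by
  rw [← taylor_eval_sub (r := MvPolynomial.C α) (f := P) f, ← Polynomial.eval_sub]
  refine Polynomial.eval_mem_of_coeff_mul_pow_mem fun j => ?_
  rw [Polynomial.coeff_sub, coeff_truncatedTaylor, taylor_coeff]
  split_ifs with hj
  · rw [← neg_sub]
    exact Ideal.mul_mem_right _ _ (neg_mem (sub_Hle_mem_pow_idealOfVars d _))
  · exact Ideal.mul_mem_left _ _
      (Ideal.pow_le_pow_right (by omega) (Ideal.pow_mem_pow hf j))

lemma derivative_truncatedTaylor_eval_zero (P : (MvPolynomial σ F)[X]) (α : F) {d : ℕ}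
    (hd : 1 ≤ d) :
    (truncatedTaylor P α d).derivative.eval 0 =
      Hle d ((hasseDeriv 1 P).eval (MvPolynomial.C α)) := by
  rw [← Polynomial.coeff_zero_eq_eval_zero, Polynomial.coeff_derivative, coeff_truncatedTaylor,
    if_pos hd]
  simp

end TruncatedTaylor

section Gset

variable {F : Type*} [CommRing F] {n : ℕ}

lemma mem_idealOfVars_of_mem_Gset {P : (MvPolynomial (Fin n) F)[X]} {α : F} {d : ℕ}
    {q : MvPolynomial (Fin n) F} (hq : q ∈ Gset P α d) : q ∈ idealOfVars (Fin n) F := by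
  simp only [Gset, Finset.mem_filter, Finset.mem_image] at hq
  obtain ⟨⟨j, -, rfl⟩, -⟩ := hq
  exact Hle_sub_homogeneousComponent_zero_mem_idealOfVars _ _

/-- `H_{≤d}[Q] = H₀[Q] + (H_{≤d}[Q] - H₀[Q])` is a constant plus an element of `G_y(P, α, d)`
or zero. -/
lemma coeff_truncatedTaylor_mem (P : (MvPolynomial (Fin n) F)[X]) (α : F) (d : ℕ)
    (S : Subalgebra F (MvPolynomial (Fin n) F)) (hS : ∀ q ∈ Gset P α d, q ∈ S) (j : ℕ) :
    (truncatedTaylor P α d).coeff j ∈ S := by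
  rw [coeff_truncatedTaylor]
  split_ifs with hj
  · set Q := (hasseDeriv j P).eval (MvPolynomial.C α)
    rw [← add_sub_cancel (homogeneousComponent 0 Q) (Hle d Q)]
    refine add_mem (by simpa [homogeneousComponent_zero] using S.algebraMap_mem (coeff 0 Q)) ?_
    by_cases hq : Hle d Q - homogeneousComponent 0 Q = 0
    · rw [hq]; exact zero_mem S
    · exact hS _ (Finset.mem_filter.2
        ⟨Finset.mem_image_of_mem _ (Finset.mem_range.2 (by omega)), hq⟩)
  · exact zero_mem S

end Gset

theorem exists_generator_representation_general {F : Type*} [Field F] {n : ℕ}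
    (P : Polynomial (MvPolynomial (Fin n) F)) (f : MvPolynomial (Fin n) F)
    (d : ℕ)
    (hroot : Polynomial.eval f P = 0)
    (δ : F)
    (hδ : δ = MvPolynomial.constantCoeff
        (Polynomial.eval f (Polynomial.hasseDeriv 1 P)))
    (hδne : δ ≠ 0)
    (t : ℕ)
    (g : Fin (t + 1) → MvPolynomial (Fin n) F)
    (hgrange : ∀ q, q ∈ Gset P (MvPolynomial.constantCoeff f) d ↔ ∃ j, g j = q) :
    ∀ i, 1 ≤ i → i ≤ d →
      ∃ A : MvPolynomial (Fin (t + 1)) F, A.totalDegree ≤ i ∧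
        Hle i f = Hle i (MvPolynomial.aeval g A) := by
  intro i hi hid
  set α := constantCoeff f
  set S := (MvPolynomial.aeval (R := F) g).range
  have hGS : ∀ q ∈ Gset P α d, q ∈ S := fun q hq => by
    obtain ⟨j, rfl⟩ := (hgrange q).1 hq
    exact ⟨X j, aeval_X g j⟩
  have hg : ∀ j, g j ∈ idealOfVars (Fin n) F :=
    fun j => mem_idealOfVars_of_mem_Gset ((hgrange _).2 ⟨j, rfl⟩)
  have hw : f - MvPolynomial.C α ∈ idealOfVars (Fin n) F := by simp [mem_idealOfVars_iff, α]
  have hu : MvPolynomial.C δ⁻¹ * (truncatedTaylor P α d).derivative.eval 0 - 1 ∈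
      idealOfVars (Fin n) F := by
    rw [derivative_truncatedTaylor_eval_zero P α (by omega), mem_idealOfVars_iff, map_sub, map_mul, constantCoeff_C, constantCoeff_Hle, constantCoeff_eval_C_constantCoeff,
      ← hδ, inv_mul_cancel₀ hδne, map_one, sub_self]
  have hT :
      (truncatedTaylor P α d).eval (f - MvPolynomial.C α) ∈ idealOfVars (Fin n) F ^ (d + 1) := by
    simpa [hroot] using eval_truncatedTaylor_sub_mem P d hw
  obtain ⟨s, hsS, hs⟩ := Polynomial.exists_mem_sub_mem_pow_of_eval_mem (S := S.toSubring)
    (coeff_truncatedTaylor_mem P α d S hGS) (S.algebraMap_mem δ⁻¹) hu hw hT i (by omega)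
  refine exists_totalDegree_le_Hle_eq hg (add_mem (S.algebraMap_mem α) hsS) ?_
  rwa [MvPolynomial.algebraMap_eq, ← sub_sub]

/-- If `P(x, f) = 0` and `δ = H₀[(∂P/∂y)(x, f)] ≠ 0`, and `g₀, …, g_t` are the
distinct elements of `G_y(P, H₀[f], d)` (with `t ≤ d`), then for every
`1 ≤ i ≤ d` there is a polynomial `A_i` in `t+1` variables of degree at most `i`
with `H_{≤i}[f] = H_{≤i}[A_i(g₀, …, g_t)]`. -/
theorem exists_generator_representation {F : Type*} [Field F] [CharZero F] {n : ℕ}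
    (P : Polynomial (MvPolynomial (Fin n) F)) (f : MvPolynomial (Fin n) F)
    (r d : ℕ) (hr : totalDegXY P = r) (hd : f.totalDegree = d)
    (hroot : Polynomial.eval f P = 0)
    (δ : F)
    (hδ : δ = MvPolynomial.constantCoeff
        (Polynomial.eval f (Polynomial.hasseDeriv 1 P)))
    (hδne : δ ≠ 0)
    (t : ℕ) (ht : t ≤ d)
    (g : Fin (t + 1) → MvPolynomial (Fin n) F)
    (hginj : Function.Injective g)
    (hgrange : ∀ q, q ∈ Gset P (MvPolynomial.constantCoeff f) d ↔ ∃ j, g j = q) :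
    ∀ i, 1 ≤ i → i ≤ d →
      ∃ A : MvPolynomial (Fin (t + 1)) F, A.totalDegree ≤ i ∧
        Hle i f = Hle i (MvPolynomial.aeval g A) :=
  exists_generator_representation_general P f d hroot δ hδ hδne t g hgrange
end

section
/- Let F be a field of characteristic zero. Let P, f ∈ F[x₁,…,xₙ,y] be polynomials of total degrees r and d respectively, both monic in y with deg_y(f) = d, such that f divides P. Suppose the roots α₁, …, α_d ∈ F of the univariate polynomial f(0, y) are pairwise distinct and each αᵢ is a root of multiplicity exactly one of P(0, y). Let q₁, …, q_d ∈ F[x₁,…,xₙ] be polynomials of degree at most d such that for every i ∈ {1,…,d}: qᵢ(0) = αᵢ and H_{≤d}[P(x, qᵢ(x))] = H_{≤d}[f(x, qᵢ(x))] = 0. Then f = H_{≤d}[∏_{i=1}^{d} (y − qᵢ(x))]. -/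
open Polynomial MvPolynomial

/-- The homogeneous component of degree `k` of `Q ∈ F[x₁,…,xₙ][y]`, where the
degree counts all variables including `y`. -/
noncomputable def HcompXY {F : Type*} [CommSemiring F] {n : ℕ} (k : ℕ)
    (Q : Polynomial (MvPolynomial (Fin n) F)) :
    Polynomial (MvPolynomial (Fin n) F) :=
  ∑ i ∈ Finset.range (k + 1),
    Polynomial.C (MvPolynomial.homogeneousComponent (k - i) (Q.coeff i)) *
      Polynomial.X ^ i

/-- `H_{≤d}[Q]` for `Q ∈ F[x₁,…,xₙ,y]`, counting the degree in all variables
including `y`. -/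
noncomputable def HleXY {F : Type*} [CommSemiring F] {n : ℕ} (d : ℕ)
    (Q : Polynomial (MvPolynomial (Fin n) F)) :
    Polynomial (MvPolynomial (Fin n) F) :=
  ∑ k ∈ Finset.range (d + 1), HcompXY k Q

section Aux

open Pointwise

lemma Finsupp.degree_add' {σ : Type*} (a b : σ →₀ ℕ) :
    (a + b).degree = a.degree + b.degree := by
  simp [Finsupp.degree_eq_weight_one, map_add]

/-- The ideal of polynomials all of whose monomials have degree `> d`. -/
noncomputable def lowIdeal (F : Type*) [CommRing F] (σ : Type*) (d : ℕ) :
    Ideal (MvPolynomial σ F) where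
  carrier := {p | ∀ m ∈ p.support, d < m.degree}
  add_mem' := by
    classical
    intro a b ha hb m hm
    rcases Finset.mem_union.mp (MvPolynomial.support_add hm) with h | h
    · exact ha m h
    · exact hb m h
  zero_mem' := by simp
  smul_mem' := by
    classical
    intro c p hp m hm
    rw [smul_eq_mul] at hm
    obtain ⟨a, _, b, hb, rfl⟩ := Finset.mem_add.mp (MvPolynomial.support_mul c p hm)
    have := hp b hb
    rw [Finsupp.degree_add']
    omega

lemma mem_lowIdeal_iff {F : Type*} [CommRing F] {σ : Type*} {d : ℕ}
    {p : MvPolynomial σ F} : p ∈ lowIdeal F σ d ↔ Hle d p = 0 := by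
  constructor
  · intro hp
    refine Finset.sum_eq_zero fun k hk =>
      homogeneousComponent_eq_zero' _ _ fun m hm => ?_
    have := hp m hm
    have : k ≤ d := Nat.lt_succ_iff.mp (Finset.mem_range.mp hk)
    omega
  · intro h m hm
    by_contra hlt
    push_neg at hlt
    have hc : MvPolynomial.coeff m p ≠ 0 := MvPolynomial.mem_support_iff.mp hm
    have hco : MvPolynomial.coeff m (Hle d p) = MvPolynomial.coeff m p := by
      unfold Hle
      rw [MvPolynomial.coeff_sum]
      simp only [coeff_homogeneousComponent]
      rw [Finset.sum_ite_eq (Finset.range (d + 1)) m.degree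
        (fun _ => MvPolynomial.coeff m p)]
      simp [Nat.lt_succ_iff, hlt]
    rw [h] at hco
    simp only [MvPolynomial.coeff_zero] at hco
    exact hc hco.symm

lemma pow_mem_lowIdeal {F : Type*} [CommRing F] {σ : Type*} {d : ℕ}
    {p : MvPolynomial σ F} (hp : MvPolynomial.constantCoeff p = 0) :
    p ^ (d + 1) ∈ lowIdeal F σ d := by
  classical
  have key : ∀ k : ℕ, ∀ m ∈ (p ^ k).support, k ≤ m.degree := by
    intro k
    induction k with
    | zero => simp
    | succ k ih =>
      intro m hm
      rw [pow_succ] at hm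
      obtain ⟨a, ha, b, hb, rfl⟩ := Finset.mem_add.mp (MvPolynomial.support_mul _ _ hm)
      have h1 : b.degree ≠ 0 := by
        intro h0
        rw [Finsupp.degree_eq_zero_iff] at h0
        subst h0
        exact (MvPolynomial.mem_support_iff.mp hb) hp
      have := ih a ha
      rw [Finsupp.degree_add']
      omega
  intro m hm
  have := key (d + 1) m hm
  omega

lemma exists_inv_mod_lowIdeal {F : Type*} [Field F] {σ : Type*} {d : ℕ}
    {u : MvPolynomial σ F} (hu : MvPolynomial.constantCoeff u ≠ 0) :
    ∃ w, u * w - 1 ∈ lowIdeal F σ d := by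
  set c := MvPolynomial.constantCoeff u with hc
  set vv := u - MvPolynomial.C c with hvv
  set t := MvPolynomial.C c⁻¹ * vv with ht
  set s := ∑ k ∈ Finset.range (d + 1), (-t) ^ k with hs
  refine ⟨MvPolynomial.C c⁻¹ * s, ?_⟩
  have htc : MvPolynomial.constantCoeff (-t) = 0 := by
    simp [ht, hvv, hc]
  have hpow : (-t) ^ (d + 1) ∈ lowIdeal F σ d := pow_mem_lowIdeal htc
  have hcc : (MvPolynomial.C c : MvPolynomial σ F) * MvPolynomial.C c⁻¹ = 1 := by
    rw [← MvPolynomial.C_mul, mul_inv_cancel₀ hu, MvPolynomial.C_1]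
  have hgeom : s * (-t - 1) = (-t) ^ (d + 1) - 1 := geom_sum_mul (-t) (d + 1)
  have hkey : u * (MvPolynomial.C c⁻¹ * s) - 1 = -((-t) ^ (d + 1)) := by
    have hu' : u = MvPolynomial.C c + vv := by rw [hvv]; ring
    rw [hu']
    linear_combination s * hcc - hgeom + (-s) * ht
  rw [hkey]
  exact neg_mem hpow

lemma coeff_HcompXY {F : Type*} [CommSemiring F] {n : ℕ} (k j : ℕ)
    (Q : Polynomial (MvPolynomial (Fin n) F)) :
    (HcompXY k Q).coeff j =
      if j ≤ k then MvPolynomial.homogeneousComponent (k - j) (Q.coeff j) else 0 := by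
  unfold HcompXY
  rw [Polynomial.finset_sum_coeff]
  simp only [Polynomial.coeff_C_mul, Polynomial.coeff_X_pow, mul_ite, mul_one, mul_zero]
  rw [Finset.sum_ite_eq (Finset.range (k + 1)) j
    (fun i => MvPolynomial.homogeneousComponent (k - i) (Q.coeff i))]
  simp [Nat.lt_succ_iff]

lemma coeff_HleXY {F : Type*} [CommSemiring F] {n : ℕ} (d j : ℕ)
    (Q : Polynomial (MvPolynomial (Fin n) F)) :
    (HleXY d Q).coeff j = ∑ k ∈ Finset.range (d + 1),
      if j ≤ k then MvPolynomial.homogeneousComponent (k - j) (Q.coeff j) else 0 := by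
  unfold HleXY
  rw [Polynomial.finset_sum_coeff]
  exact Finset.sum_congr rfl fun k _ => coeff_HcompXY k j Q

lemma sum_homog_eq {F : Type*} [CommSemiring F] {σ : Type*} (N : ℕ)
    (p : MvPolynomial σ F) (h : p.totalDegree ≤ N) :
    ∑ m ∈ Finset.range (N + 1), MvPolynomial.homogeneousComponent m p = p := by
  have h2 : ∑ m ∈ Finset.range (N + 1), MvPolynomial.homogeneousComponent m p
      = ∑ m ∈ Finset.range (p.totalDegree + 1), MvPolynomial.homogeneousComponent m p := by
    symm
    apply Finset.sum_subset
    · exact Finset.range_subset_range.mpr (by omega)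
    · intro i _ hi
      simp only [Finset.mem_range, not_lt] at hi
      exact homogeneousComponent_eq_zero _ _ (by omega)
  rw [h2, MvPolynomial.sum_homogeneousComponent]

lemma HcompXY_add {F : Type*} [CommSemiring F] {n : ℕ} (k : ℕ)
    (A B : Polynomial (MvPolynomial (Fin n) F)) :
    HcompXY k (A + B) = HcompXY k A + HcompXY k B := by
  unfold HcompXY
  rw [← Finset.sum_add_distrib]
  exact Finset.sum_congr rfl fun i _ => by
    rw [Polynomial.coeff_add, map_add, map_add, add_mul]

lemma HleXY_add {F : Type*} [CommSemiring F] {n : ℕ} (d : ℕ)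
    (A B : Polynomial (MvPolynomial (Fin n) F)) :
    HleXY d (A + B) = HleXY d A + HleXY d B := by
  unfold HleXY
  rw [← Finset.sum_add_distrib]
  exact Finset.sum_congr rfl fun k _ => HcompXY_add k A B

lemma HleXY_eq_self {F : Type*} [CommRing F] {n d : ℕ}
    (Q : Polynomial (MvPolynomial (Fin n) F)) (hQ : totalDegXY Q ≤ d) :
    HleXY d Q = Q := by
  have hcoeff : ∀ j, j + (Q.coeff j).totalDegree ≤ d ∨ Q.coeff j = 0 := by
    intro j
    by_cases hj : j ∈ Q.support
    · refine Or.inl (le_trans ?_ hQ)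
      exact Finset.le_sup (f := fun i => i + (Q.coeff i).totalDegree) hj
    · exact Or.inr (Polynomial.notMem_support_iff.mp hj)
  ext j : 1
  rw [coeff_HleXY]
  rcases hcoeff j with h | h
  · have hjd : j ≤ d := le_trans (Nat.le_add_right _ _) h
    rw [Finset.range_eq_Ico, ← Finset.sum_Ico_consecutive _ (Nat.zero_le j) (by omega)]
    have h1 : ∑ k ∈ Finset.Ico 0 j,
        (if j ≤ k then MvPolynomial.homogeneousComponent (k - j) (Q.coeff j) else 0) = 0 :=
      Finset.sum_eq_zero fun k hk => by
        rw [Finset.mem_Ico] at hk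
        rw [if_neg (by omega)]
    have h2 : ∑ k ∈ Finset.Ico j (d + 1),
        (if j ≤ k then MvPolynomial.homogeneousComponent (k - j) (Q.coeff j) else 0)
        = ∑ k ∈ Finset.Ico j (d + 1),
          MvPolynomial.homogeneousComponent (k - j) (Q.coeff j) :=
      Finset.sum_congr rfl fun k hk => by
        rw [Finset.mem_Ico] at hk
        rw [if_pos hk.1]
    rw [h1, h2, zero_add, Finset.sum_Ico_eq_sum_range]
    have hd1 : d + 1 - j = (d - j) + 1 := by omega
    rw [hd1]
    have h3 : ∀ m ∈ Finset.range (d - j + 1),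
        MvPolynomial.homogeneousComponent (j + m - j) (Q.coeff j)
        = MvPolynomial.homogeneousComponent m (Q.coeff j) := fun m _ => by
      rw [show j + m - j = m by omega]
    rw [Finset.sum_congr rfl h3]
    exact sum_homog_eq (d - j) (Q.coeff j) (by omega)
  · simp [h]

lemma HleXY_eq_zero_of_coeffs {F : Type*} [CommRing F] {n d : ℕ}
    (Q : Polynomial (MvPolynomial (Fin n) F))
    (h : ∀ j, Q.coeff j ∈ lowIdeal F (Fin n) d) :
    HleXY d Q = 0 := by
  ext j : 1
  rw [coeff_HleXY, Polynomial.coeff_zero]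
  refine Finset.sum_eq_zero fun k hk => ?_
  rw [Finset.mem_range] at hk
  split_ifs with hjk
  · refine homogeneousComponent_eq_zero' _ _ fun m hm => ?_
    have := h j m hm
    omega
  · rfl

end Aux

set_option maxHeartbeats 1000000 in
set_option synthInstance.maxHeartbeats 400000 in
/-- **Combining approximate roots.** If `f` is a monic (in `y`) factor of the
monic polynomial `P`, the roots `α₁, …, α_d` of `f(0, y)` are distinct roots of
multiplicity exactly one of `P(0, y)`, and `q₁, …, q_d` are polynomials of
degree at most `d` with `qᵢ(0) = αᵢ` and
`H_{≤d}[P(x, qᵢ)] = H_{≤d}[f(x, qᵢ)] = 0`, then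
`f = H_{≤d}[∏ᵢ (y − qᵢ(x))]`. -/
theorem combining_approximate_roots {F : Type*} [Field F] [CharZero F] {n : ℕ}
    (P f : Polynomial (MvPolynomial (Fin n) F)) (r d : ℕ)
    (hrP : totalDegXY P = r) (hdf : totalDegXY f = d)
    (hPmonic : P.Monic) (hfmonic : f.Monic) (hfdeg : f.natDegree = d)
    (hdvd : f ∣ P)
    (α : Fin d → F) (hαinj : Function.Injective α)
    (hroots : f.map (MvPolynomial.constantCoeff) =
      ∏ i, (Polynomial.X - Polynomial.C (α i)))
    (hmult : ∀ i,
      (Polynomial.X - Polynomial.C (α i)) ∣ P.map MvPolynomial.constantCoeff ∧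
      ¬ (Polynomial.X - Polynomial.C (α i)) ^ 2 ∣ P.map MvPolynomial.constantCoeff)
    (q : Fin d → MvPolynomial (Fin n) F)
    (hqdeg : ∀ i, (q i).totalDegree ≤ d)
    (hqval : ∀ i, MvPolynomial.constantCoeff (q i) = α i)
    (hqP : ∀ i, Hle d (Polynomial.eval (q i) P) = 0)
    (hqf : ∀ i, Hle d (Polynomial.eval (q i) f) = 0) :
    f = HleXY d (∏ i, (Polynomial.X - Polynomial.C (q i))) := by
  classical
  set g : Polynomial (MvPolynomial (Fin n) F) :=
    ∏ i, (Polynomial.X - Polynomial.C (q i)) with hg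
  have hgmonic : g.Monic := monic_prod_of_monic _ _ fun i _ => monic_X_sub_C _
  have hgdeg : g.natDegree = d := by
    rw [hg, Polynomial.natDegree_prod_of_monic _ _ fun i _ => monic_X_sub_C _]
    simp
  rcases Nat.eq_zero_or_pos d with hd0 | hd
  · subst hd0
    have hf1 : f = 1 := hfmonic.natDegree_eq_zero.mp hfdeg
    have hg1 : g = 1 := by
      rw [hg]
      simp
    have h1deg : totalDegXY (1 : Polynomial (MvPolynomial (Fin n) F)) ≤ 0 := by
      unfold totalDegXY
      apply Finset.sup_le
      intro i hi
      have hi0 : i = 0 := by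
        by_contra hne
        exact (Polynomial.mem_support_iff.mp hi) (by simp [Polynomial.coeff_one, hne])
      subst hi0
      simp [Polynomial.coeff_one]
    rw [hf1, hg1]
    exact (HleXY_eq_self 1 h1deg).symm
  · set D : Polynomial (MvPolynomial (Fin n) F) := f - g with hD
    have hDdeg : D.natDegree < d := by
      by_cases hfg : f = g
      · rw [hD, hfg, sub_self]
        simpa using hd
      · have hdeg : f.degree = g.degree := by
          rw [Polynomial.degree_eq_natDegree hfmonic.ne_zero,
            Polynomial.degree_eq_natDegree hgmonic.ne_zero, hfdeg, hgdeg]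
        have h1 : (f - g).degree < f.degree :=
          Polynomial.degree_sub_lt hdeg hfmonic.ne_zero
            (by rw [hfmonic.leadingCoeff, hgmonic.leadingCoeff])
        rw [hD, Polynomial.natDegree_lt_iff_degree_lt (sub_ne_zero.mpr hfg)]
        calc (f - g).degree < f.degree := h1
          _ = (d : ℕ) := by rw [Polynomial.degree_eq_natDegree hfmonic.ne_zero, hfdeg]
    set J : Ideal (MvPolynomial (Fin n) F) := lowIdeal F (Fin n) d with hJ
    have hgeval : ∀ i, Polynomial.eval (q i) g = 0 := fun i => by
      rw [hg, Polynomial.eval_prod]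
      exact Finset.prod_eq_zero (Finset.mem_univ i) (by simp)
    have hDeval : ∀ i, Polynomial.eval (q i) D ∈ J := fun i => by
      rw [hD, Polynomial.eval_sub, hgeval i, sub_zero]
      exact mem_lowIdeal_iff.mpr (hqf i)
    set M : Matrix (Fin d) (Fin d) (MvPolynomial (Fin n) F) :=
      Matrix.vandermonde q with hM
    set v : Fin d → MvPolynomial (Fin n) F := fun j => D.coeff j with hv
    have hMv : ∀ i, M.mulVec v i ∈ J := by
      intro i
      have he : Polynomial.eval (q i) D = ∑ j ∈ Finset.range d, D.coeff j * (q i) ^ j :=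
        Polynomial.eval_eq_sum_range' hDdeg _
      have h0 : ∑ j ∈ Finset.range d, D.coeff j * (q i) ^ j ∈ J := by
        rw [← he]; exact hDeval i
      have hrw : M.mulVec v i = ∑ j ∈ Finset.range d, D.coeff j * (q i) ^ j := by
        rw [← Fin.sum_univ_eq_sum_range (fun j => D.coeff j * (q i) ^ j)]
        simp only [Matrix.mulVec, dotProduct, hM, Matrix.vandermonde_apply, hv]
        exact Finset.sum_congr rfl fun j _ => mul_comm _ _
      rw [hrw]
      exact h0
    have hdetJ : ∀ j, M.det * v j ∈ J := by
      intro j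
      have h1 : M.det • v = M.adjugate.mulVec (M.mulVec v) := by
        rw [Matrix.mulVec_mulVec, Matrix.adjugate_mul, Matrix.smul_mulVec,
          Matrix.one_mulVec]
      have h2 : M.det * v j = ∑ i, M.adjugate j i * M.mulVec v i := by
        have := congrFun h1 j
        rw [Pi.smul_apply, smul_eq_mul] at this
        rw [this]
        rfl
      rw [h2]
      exact Ideal.sum_mem _ fun i _ => Ideal.mul_mem_left _ _ (hMv i)
    have hdetc : MvPolynomial.constantCoeff M.det ≠ 0 := by
      have h3 : MvPolynomial.constantCoeff M.det = (Matrix.vandermonde α).det := by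
        rw [hM, RingHom.map_det]
        congr 1
        ext i j
        simp [Matrix.vandermonde_apply, map_pow, hqval]
      rw [h3, Matrix.det_vandermonde]
      apply Finset.prod_ne_zero_iff.mpr
      intro i _
      apply Finset.prod_ne_zero_iff.mpr
      intro j hj
      have hij : i ≠ j := (Finset.mem_Ioi.mp hj).ne
      exact sub_ne_zero.mpr fun hαe => hij (hαinj hαe).symm
    obtain ⟨w, hw⟩ := exists_inv_mod_lowIdeal (d := d) hdetc
    have hvz : ∀ j, v j ∈ J := by
      intro j
      have hid : v j = w * (M.det * v j) - (M.det * w - 1) * v j := by ring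
      rw [hid]
      exact sub_mem (Ideal.mul_mem_left _ _ (hdetJ j)) (Ideal.mul_mem_right _ _ hw)
    have hcoeffJ : ∀ j : ℕ, D.coeff j ∈ lowIdeal F (Fin n) d := by
      intro j
      by_cases hj : j < d
      · exact hvz ⟨j, hj⟩
      · rw [Polynomial.coeff_eq_zero_of_natDegree_lt (by omega)]
        exact zero_mem _
    have hDH : HleXY d D = 0 := HleXY_eq_zero_of_coeffs D hcoeffJ
    have hfgD : f = g + D := by rw [hD]; ring
    have hsplit : HleXY d f = HleXY d g + HleXY d D := by
      calc HleXY d f = HleXY d (g + D) := by rw [← hfgD]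
        _ = HleXY d g + HleXY d D := HleXY_add d g D
    rw [hDH, add_zero] at hsplit
    rw [← hsplit]
    exact (HleXY_eq_self f (le_of_eq hdf)).symm
end

section
/- There exists an absolute constant C > 0 such that for all integers n, m with 2 ≤ n < 2^m, there exists an integer ℓ ≤ C·m²/log₂(n) and a family of subsets S₁, S₂, …, Sₙ of {1, 2, …, ℓ} such that |Sᵢ| = m for every i ∈ {1,…,n}, and |Sᵢ ∩ Sⱼ| ≤ log₂(n) for all i ≠ j. -/
/-!
Greedy construction. Put `r = ⌊log₂ n⌋ + 1`, so `n < 2^r`, and `ℓ ≈ 6m²/r`, and choose `m`-subsets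
of an `ℓ`-set one at a time, each meeting every earlier one in fewer than `r` points. A fixed
`m`-set `S` meets at most `C(m,r)·C(ℓ-r,m-r)` of the `m`-sets in `r` or more points (each contains
an `r`-subset of `S`), so a choice remains while `(n-1)·C(m,r)·C(ℓ-r,m-r) < C(ℓ,m)`. Through
`C(ℓ,m)·C(m,r) = C(ℓ,r)·C(ℓ-r,m-r)` this reduces to `n·C(m,r)² < C(ℓ,r)`, which follows from
`C(m,r)·ℓ^r ≤ C(ℓ,r)·m^r`, `C(m,r) ≤ (em/r)^r` and `n < 2^r`, because `2e·m² ≤ ℓr`.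
-/

open Finset

theorem Finset.exists_pairwise_not_rel {α : Type*} [DecidableEq α] (U : Finset α)
    {R : α → α → Prop} [DecidableRel R] [Std.Symm R] {B : ℕ}
    (hB : ∀ x ∈ U, #{y ∈ U | R x y} ≤ B) :
    ∀ n : ℕ, (n - 1) * B < #U →
      ∃ f : Fin n → α, (∀ i, f i ∈ U) ∧ Pairwise fun i j ↦ ¬R (f i) (f j)
  | 0, _ => ⟨Fin.elim0, fun i ↦ i.elim0, fun i ↦ i.elim0⟩
  | n + 1, hn => by
    obtain ⟨f, hfU, hf⟩ := U.exists_pairwise_not_rel hB n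
      (lt_of_le_of_lt (Nat.mul_le_mul_right _ (n.sub_le 1)) hn)
    have hblocked : #(univ.biUnion fun i ↦ {y ∈ U | R (f i) y}) < #U :=
      calc _ ≤ ∑ i, #{y ∈ U | R (f i) y} := card_biUnion_le
        _ ≤ ∑ _i : Fin n, B := sum_le_sum fun i _ ↦ hB _ (hfU i)
        _ = n * B := by simp
        _ < #U := by simpa using hn
    obtain ⟨x, hxU, hx⟩ := exists_mem_notMem_of_card_lt_card hblocked
    simp only [mem_biUnion, mem_univ, mem_filter, hxU, true_and, not_exists] at hx
    refine ⟨Fin.snoc f x, Fin.lastCases (by simpa) fun i ↦ by simpa using hfU i, ?_⟩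
    intro i j hij
    induction i using Fin.lastCases <;> induction j using Fin.lastCases
    · exact absurd rfl hij
    · simpa using fun h ↦ hx _ (Std.Symm.symm _ _ h)
    · simpa using hx _
    · simpa using hf (Fin.castSucc_injective _ |>.ne_iff.mp hij)

section Counting

variable {α : Type*} [Fintype α] [DecidableEq α]

theorem card_filter_superset_le (A : Finset α) (m : ℕ) :
    #{T ∈ powersetCard m (univ : Finset α) | A ⊆ T} ≤ (Fintype.card α - #A).choose (m - #A) := by
  have hsub : {T ∈ powersetCard m (univ : Finset α) | A ⊆ T} ⊆
      (powersetCard (m - #A) Aᶜ).image (· ∪ A) := by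
    intro T hT
    simp only [mem_filter, mem_powersetCard, subset_univ, true_and] at hT
    obtain ⟨hTm, hAT⟩ := hT
    refine mem_image.2 ⟨T \ A, mem_powersetCard.2 ⟨?_, ?_⟩, sdiff_union_of_subset hAT⟩
    · simp [subset_iff]
    · rw [card_sdiff_of_subset hAT, hTm]
  calc _ ≤ _ := card_le_card hsub
    _ ≤ #(powersetCard (m - #A) Aᶜ) := card_image_le
    _ = _ := by rw [card_powersetCard, card_compl]

theorem card_filter_le_card_inter_le (S : Finset α) (r m : ℕ) :
    #{T ∈ powersetCard m (univ : Finset α) | r ≤ #(S ∩ T)} ≤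
      (#S).choose r * (Fintype.card α - r).choose (m - r) := by
  have hsub : {T ∈ powersetCard m (univ : Finset α) | r ≤ #(S ∩ T)} ⊆
      (powersetCard r S).biUnion fun A ↦ {T ∈ powersetCard m (univ : Finset α) | A ⊆ T} := by
    intro T hT
    rw [mem_filter] at hT
    obtain ⟨A, hAT, hAr⟩ := exists_subset_card_eq hT.2
    exact mem_biUnion.2 ⟨A, mem_powersetCard.2 ⟨hAT.trans inter_subset_left, hAr⟩,
      mem_filter.2 ⟨hT.1, hAT.trans inter_subset_right⟩⟩
  calc _ ≤ _ := card_le_card hsub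
    _ ≤ ∑ A ∈ powersetCard r S, #{T ∈ powersetCard m (univ : Finset α) | A ⊆ T} := card_biUnion_le
    _ ≤ ∑ _A ∈ powersetCard r S, (Fintype.card α - r).choose (m - r) :=
      sum_le_sum fun A hA ↦ (mem_powersetCard.1 hA).2 ▸ card_filter_superset_le A m
    _ = _ := by rw [sum_const, card_powersetCard, smul_eq_mul]

end Counting

theorem Nat.choose_mul_pow_le_choose_mul_pow {m ℓ : ℕ} (hmℓ : m ≤ ℓ) (r : ℕ) :
    m.choose r * ℓ ^ r ≤ ℓ.choose r * m ^ r := by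
  refine Nat.le_of_mul_le_mul_left ?_ r.factorial_pos
  rw [← mul_assoc, ← mul_assoc, ← descFactorial_eq_factorial_mul_choose,
    ← descFactorial_eq_factorial_mul_choose, descFactorial_eq_prod_range,
    descFactorial_eq_prod_range, pow_eq_prod_const ℓ, pow_eq_prod_const m, ← prod_mul_distrib,
    ← prod_mul_distrib]
  refine prod_le_prod' fun i _ ↦ ?_
  rw [Nat.sub_mul, Nat.sub_mul, mul_comm ℓ]
  exact Nat.sub_le_sub_left (Nat.mul_le_mul_left i hmℓ) _

theorem Nat.choose_le_exp_one_mul_div_pow (m r : ℕ) :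
    (m.choose r : ℝ) ≤ (Real.exp 1 * m / r) ^ r := by
  rcases r.eq_zero_or_pos with rfl | hr
  · simp
  have hfact : (r : ℝ) ^ r / Real.exp r ≤ r.factorial := by
    rw [div_le_iff₀ (Real.exp_pos _), mul_comm, ← div_le_iff₀ (by positivity)]
    exact Real.pow_div_factorial_le_exp _ r.cast_nonneg r
  calc (m.choose r : ℝ) ≤ m ^ r / r.factorial := Nat.choose_le_pow_div r m
    _ ≤ m ^ r / ((r : ℝ) ^ r / Real.exp r) := by gcongr
    _ = (Real.exp 1 * m / r) ^ r := by
      rw [div_pow, mul_pow, ← Real.exp_nat_mul, mul_one]; field_simp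

theorem Nat.mul_choose_sq_lt_choose {n m r ℓ : ℕ} (hr : 0 < r) (hrm : r ≤ m) (hmℓ : m ≤ ℓ)
    (hn : n < 2 ^ r) (hℓ : 6 * m ^ 2 ≤ ℓ * r) : n * m.choose r ^ 2 < ℓ.choose r := by
  have hm : (0 : ℝ) < m := by exact_mod_cast hr.trans_le hrm
  have hcm : (0 : ℝ) < m.choose r := by exact_mod_cast Nat.choose_pos hrm
  have hcℓ : (0 : ℝ) < ℓ.choose r := by exact_mod_cast Nat.choose_pos (hrm.trans hmℓ)
  have hratio : (m.choose r : ℝ) * ℓ ^ r ≤ ℓ.choose r * m ^ r := by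
    exact_mod_cast Nat.choose_mul_pow_le_choose_mul_pow hmℓ r
  have hbase : 2 * (Real.exp 1 * m / r) * m ≤ ℓ := by
    have : 2 * Real.exp 1 * m ^ 2 ≤ ℓ * r := by
      have : (6 * m ^ 2 : ℝ) ≤ ℓ * r := by exact_mod_cast hℓ
      nlinarith [Real.exp_one_lt_d9]
    rw [mul_div_assoc', div_mul_eq_mul_div, div_le_iff₀ (by positivity)]
    linarith
  suffices (n : ℝ) * m.choose r ^ 2 * ℓ ^ r < ℓ.choose r * ℓ ^ r by
    exact_mod_cast lt_of_mul_lt_mul_right this (by positivity)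
  calc (n : ℝ) * m.choose r ^ 2 * ℓ ^ r = n * m.choose r * (m.choose r * ℓ ^ r) := by ring
    _ ≤ n * m.choose r * (ℓ.choose r * m ^ r) := by gcongr
    _ < 2 ^ r * m.choose r * (ℓ.choose r * m ^ r) := by gcongr; exact_mod_cast hn
    _ ≤ 2 ^ r * (Real.exp 1 * m / r) ^ r * (ℓ.choose r * m ^ r) := by
      gcongr; exact Nat.choose_le_exp_one_mul_div_pow m r
    _ = (2 * (Real.exp 1 * m / r) * m) ^ r * ℓ.choose r := by ring
    _ ≤ ℓ ^ r * ℓ.choose r := by gcongr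
    _ = ℓ.choose r * ℓ ^ r := mul_comm _ _

theorem Nat.mul_choose_mul_choose_lt_choose {n m r ℓ : ℕ} (hrm : r ≤ m) (hmℓ : m ≤ ℓ)
    (h : n * m.choose r ^ 2 < ℓ.choose r) :
    n * (m.choose r * (ℓ - r).choose (m - r)) < ℓ.choose m := by
  have hpos : 0 < (ℓ - r).choose (m - r) := Nat.choose_pos (Nat.sub_le_sub_right hmℓ r)
  refine Nat.lt_of_mul_lt_mul_right (a := m.choose r) ?_
  calc n * (m.choose r * (ℓ - r).choose (m - r)) * m.choose r
      = n * m.choose r ^ 2 * (ℓ - r).choose (m - r) := by ring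
    _ < ℓ.choose r * (ℓ - r).choose (m - r) := Nat.mul_lt_mul_of_pos_right h hpos
    _ = ℓ.choose m * m.choose r := (Nat.choose_mul hrm).symm

theorem exists_six_mul_sq_le_mul {m r : ℕ} (hr : 0 < r) (hrm : r ≤ m) :
    ∃ ℓ : ℕ, m ≤ ℓ ∧ 6 * m ^ 2 ≤ ℓ * r ∧ (ℓ : ℝ) ≤ 12 * m ^ 2 / r := by
  have hmq : m ≤ m ^ 2 / r := (Nat.le_div_iff_mul_le hr).2 (by nlinarith)
  refine ⟨6 * (m ^ 2 / r + 1), by omega, ?_, ?_⟩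
  · nlinarith [Nat.lt_div_mul_add (a := m ^ 2) hr]
  · have hq : ((m ^ 2 / r : ℕ) : ℝ) ≤ m ^ 2 / r := by
      exact_mod_cast Nat.cast_div_le (m := m ^ 2) (n := r)
    have : (1 : ℝ) ≤ (m ^ 2 / r : ℕ) := by exact_mod_cast (hr.trans_le hrm).trans_le hmq
    rw [mul_div_assoc]
    push_cast
    linarith

/-- **Nisan–Wigderson designs.** There is an absolute constant `C > 0` such
that for all integers `2 ≤ n < 2^m` there exist `ℓ ≤ C·m²/log₂ n` and subsets
`S₁, …, Sₙ ⊆ {1,…,ℓ}`, each of size `m`, with `|Sᵢ ∩ Sⱼ| ≤ log₂ n` for all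
`i ≠ j`. -/
theorem nisan_wigderson_designs :
    ∃ C : ℝ, 0 < C ∧
      ∀ n m : ℕ, 2 ≤ n → n < 2 ^ m →
        ∃ ℓ : ℕ, (ℓ : ℝ) ≤ C * (m : ℝ) ^ 2 / Real.logb 2 n ∧
          ∃ S : Fin n → Finset (Fin ℓ),
            (∀ i, (S i).card = m) ∧
            ∀ i j, i ≠ j → ((S i ∩ S j).card : ℝ) ≤ Real.logb 2 n := by
  refine ⟨12, by norm_num, fun n m hn hnm ↦ ?_⟩
  set r := Nat.log 2 n + 1
  have hr : 0 < r := Nat.succ_pos _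
  have hrm : r ≤ m := Nat.log_lt_of_lt_pow (by omega) hnm
  have hlog_pos : 0 < Real.logb 2 n := Real.logb_pos one_lt_two (by exact_mod_cast hn)
  have hlog_lt : Real.logb 2 n < r := by
    have := Nat.lt_floor_add_one (Real.logb 2 n)
    rw [show (2 : ℝ) = (2 : ℕ) by norm_num, Real.natFloor_logb_natCast] at this
    exact_mod_cast this
  obtain ⟨ℓ, hmℓ, hℓ, hℓC⟩ := exists_six_mul_sq_le_mul hr hrm
  have : Std.Symm fun T S : Finset (Fin ℓ) ↦ r ≤ #(T ∩ S) := ⟨fun T S h ↦ by rwa [inter_comm]⟩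
  have hcount : (n - 1) * (m.choose r * (ℓ - r).choose (m - r)) <
      #(powersetCard m (univ : Finset (Fin ℓ))) := by
    rw [card_powersetCard, card_univ, Fintype.card_fin]
    exact (Nat.mul_le_mul_right _ (n.sub_le 1)).trans_lt <| Nat.mul_choose_mul_choose_lt_choose hrm
      hmℓ <| Nat.mul_choose_sq_lt_choose hr hrm hmℓ (Nat.lt_pow_succ_log_self one_lt_two n) hℓ
  obtain ⟨S, hSU, hS⟩ := (powersetCard m univ).exists_pairwise_not_rel (fun T hT ↦ by
    simpa [(mem_powersetCard.1 hT).2] using card_filter_le_card_inter_le T r m) n hcount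
  refine ⟨ℓ, hℓC.trans ?_, S, fun i ↦ (mem_powersetCard.1 (hSU i)).2, fun i j hij ↦ ?_⟩
  · gcongr
  · have : #(S i ∩ S j) ≤ Nat.log 2 n := Nat.lt_succ_iff.1 (not_le.1 (hS hij))
    exact (Nat.cast_le.2 this).trans (by exact_mod_cast Real.natLog_le_logb n 2)
end
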